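/- (Combined prediction-step bound for Algorithm 2) Let x⁻_{k+1} = x_k − (|f(x_k,t_k) − f(x_k,t_{k−1})|/‖∇_x f(x_k,t_k)‖²)·∇_x f(x_k,t_k) if ‖∇_x f(x_k,t_k)‖ ≥ ε and x⁻_{k+1} = x_k otherwise, where t_{k−1} = t_k − δ. Then |f(x⁻_{k+1}, t_k + δ) − f(x_k, t_k)| ≤ max(γ'δ², μδ), where γ' = K3 + 2K1/δ + K1²M/ε² + K2(K1 + (δ/2)K3)/ε + δ²K3²M/(4ε²) and μ = K1 + (δ/2)K3. -/

import Mathlib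

/-!
Write `g = ∇ₓf(x_k, t_k)` and `Δ = |f(x_k, t_k) - f(x_k, t_k - δ)| ≤ K₁δ`. The prediction step
`-(Δ/‖g‖²) g` decreases the linearisation `⟪g, ·⟫` by exactly `Δ` and has length
`ρ = Δ/‖g‖ ≤ K₁δ/ε`. The descent lemma for `f(·, t_k + δ)`, whose gradient at `x_k` is within
`K₂δ` of `g`, bounds the linearisation error by `Mρ²/2 + K₂δρ`; adding `Δ` and the change
`|f(x_k, t_k + δ) - f(x_k, t_k)| ≤ K₁δ` in time gives at most `γ'δ²`. Without a prediction step
only the change in time, `K₁δ ≤ μδ`, remains.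
-/

open RealInnerProductSpace

theorem norm_sub_le_of_norm_deriv_le_mul_sub {F : Type*} [NormedAddCommGroup F] [NormedSpace ℝ F]
    {f f' : ℝ → F} {a b K : ℝ} (hab : a ≤ b)
    (hf : ∀ u ∈ Set.Icc a b, HasDerivAt f (f' u) u)
    (hf' : ∀ u ∈ Set.Icc a b, ‖f' u‖ ≤ K * (u - a)) :
    ‖f b - f a‖ ≤ K / 2 * (b - a) ^ 2 := by
  have hB (u : ℝ) : HasDerivAt (fun u => K / 2 * (u - a) ^ 2) (K * (u - a)) u :=
    ((((hasDerivAt_id' u).sub_const a).fun_pow 2).const_mul (K / 2)).congr_deriv (by ring)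
  refine image_norm_le_of_norm_deriv_right_le_deriv_boundary (f := fun u => f u - f a)
    (fun u hu => (hf u hu).continuousAt.continuousWithinAt.sub continuousWithinAt_const)
    (fun u hu => ((hf u (Set.Ico_subset_Icc_self hu)).sub_const (f a)).hasDerivWithinAt)
    (by simp) hB (fun u hu => hf' u (Set.Ico_subset_Icc_self hu)) (Set.right_mem_Icc.2 hab)

theorem norm_sub_le_of_norm_deriv_le_of_nonneg {F : Type*} [NormedAddCommGroup F]
    [NormedSpace ℝ F] {f f' : ℝ → F} {C a b : ℝ}
    (hf : ∀ t, 0 ≤ t → HasDerivAt f (f' t) t) (hf' : ∀ t, 0 ≤ t → ‖f' t‖ ≤ C)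
    (ha : 0 ≤ a) (hab : a ≤ b) :
    ‖f b - f a‖ ≤ C * (b - a) := by
  have := (convex_Ici 0).norm_image_sub_le_of_norm_hasDerivWithin_le
    (fun t ht => (hf t ht).hasDerivWithinAt) hf' (Set.mem_Ici.2 ha) (Set.mem_Ici.2 (ha.trans hab))
  rwa [Real.norm_of_nonneg (sub_nonneg.2 hab)] at this

section InnerProductSpace

variable {E : Type*} [NormedAddCommGroup E] [InnerProductSpace ℝ E]

theorem inner_self_smul_div_norm_sq {g : E} (hg : g ≠ 0) (c : ℝ) : ⟪g, (c / ‖g‖ ^ 2) • g⟫ = c := by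
  rw [real_inner_smul_right, real_inner_self_eq_norm_sq]
  field_simp [norm_ne_zero_iff.2 hg]

theorem norm_smul_div_norm_sq_self (g : E) (c : ℝ) : ‖(c / ‖g‖ ^ 2) • g‖ = |c| / ‖g‖ := by
  rcases eq_or_ne g 0 with rfl | hg
  · simp
  rw [norm_smul, Real.norm_eq_abs, abs_div, abs_pow, abs_norm]
  field_simp [norm_ne_zero_iff.2 hg]

variable [CompleteSpace E]

theorem HasGradientAt.hasDerivAt_add_smul {φ : E → ℝ} {g x v : E} {u : ℝ}
    (h : HasGradientAt φ g (x + u • v)) :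
    HasDerivAt (fun u : ℝ => φ (x + u • v)) ⟪g, v⟫ u := by
  have hline : HasDerivAt (fun u : ℝ => x + u • v) v u := by
    simpa using ((hasDerivAt_id u).smul_const v).const_add x
  have := h.hasFDerivAt.comp_hasDerivAt u hline
  simpa [Function.comp_def] using this

theorem abs_sub_sub_inner_le_of_lipschitz_gradient {φ : E → ℝ} {g : E → E} {M : ℝ}
    (hφ : ∀ x, HasGradientAt φ (g x) x) (hg : ∀ x y, ‖g x - g y‖ ≤ M * ‖x - y‖) (x y : E) :
    |φ y - φ x - ⟪g x, y - x⟫| ≤ M / 2 * ‖y - x‖ ^ 2 := by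
  set v := y - x
  have hderiv (u : ℝ) : HasDerivAt (fun u : ℝ => φ (x + u • v) - u * ⟪g x, v⟫)
      (⟪g (x + u • v) - g x, v⟫) u := by
    rw [inner_sub_left]
    exact (hφ _).hasDerivAt_add_smul.sub ((hasDerivAt_id' u).mul_const _ |>.congr_deriv (one_mul _))
  have hbound (u : ℝ) (hu : u ∈ Set.Icc (0 : ℝ) 1) :
      ‖⟪g (x + u • v) - g x, v⟫‖ ≤ M * ‖v‖ ^ 2 * (u - 0) := calc
    ‖⟪g (x + u • v) - g x, v⟫‖ ≤ ‖g (x + u • v) - g x‖ * ‖v‖ := norm_inner_le_norm _ _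
    _ ≤ M * ‖x + u • v - x‖ * ‖v‖ := by gcongr; exact hg _ _
    _ = M * ‖v‖ ^ 2 * (u - 0) := by
      rw [add_sub_cancel_left, norm_smul, Real.norm_of_nonneg hu.1]; ring
  calc |φ y - φ x - ⟪g x, v⟫|
      = ‖(φ (x + (1 : ℝ) • v) - 1 * ⟪g x, v⟫) - (φ (x + (0 : ℝ) • v) - 0 * ⟪g x, v⟫)‖ := by
        simp only [one_smul, zero_smul, add_zero, v, add_sub_cancel, Real.norm_eq_abs]; ring_nf
    _ ≤ M * ‖v‖ ^ 2 / 2 * (1 - 0) ^ 2 :=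
        norm_sub_le_of_norm_deriv_le_mul_sub zero_le_one (fun u _ => hderiv u) hbound
    _ = M / 2 * ‖v‖ ^ 2 := by ring

theorem abs_sub_sub_inner_le_of_lipschitz_gradient_of_near {φ : E → ℝ} {g : E → E} {M : ℝ}
    (hφ : ∀ x, HasGradientAt φ (g x) x) (hg : ∀ x y, ‖g x - g y‖ ≤ M * ‖x - y‖) (x y w : E) :
    |φ y - φ x - ⟪w, y - x⟫| ≤ M / 2 * ‖y - x‖ ^ 2 + ‖g x - w‖ * ‖y - x‖ := by
  have hsplit : φ y - φ x - ⟪w, y - x⟫ = (φ y - φ x - ⟪g x, y - x⟫) + ⟪g x - w, y - x⟫ := by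
    rw [inner_sub_left]; ring
  rw [hsplit]
  exact (abs_add_le _ _).trans (add_le_add
    (abs_sub_sub_inner_le_of_lipschitz_gradient hφ hg x y) (abs_real_inner_le_norm _ _))

theorem abs_sub_le_of_gradient_step {φ : E → ℝ} {G : E → E} {M D c a : ℝ}
    (hφ : ∀ x, HasGradientAt φ (G x) x) (hG : ∀ x y, ‖G x - G y‖ ≤ M * ‖x - y‖) {x g : E}
    (hg : g ≠ 0) (hc : 0 ≤ c) (hD : ‖G x - g‖ ≤ D) :
    |φ (x - (c / ‖g‖ ^ 2) • g) - a| ≤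
      M / 2 * (c / ‖g‖) ^ 2 + D * (c / ‖g‖) + c + |φ x - a| := by
  set y := x - (c / ‖g‖ ^ 2) • g
  have hstep : y - x = -((c / ‖g‖ ^ 2) • g) := by simp only [y]; abel
  have hinner : ⟪g, y - x⟫ = -c := by
    rw [hstep, inner_neg_right, inner_self_smul_div_norm_sq hg]
  have hnorm : ‖y - x‖ = c / ‖g‖ := by
    rw [hstep, norm_neg, norm_smul_div_norm_sq_self, abs_of_nonneg hc]
  have hdescent := abs_sub_sub_inner_le_of_lipschitz_gradient_of_near hφ hG x y g
  rw [hinner, hnorm] at hdescent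
  have hdrift := mul_le_mul_of_nonneg_right hD (by positivity : 0 ≤ c / ‖g‖)
  calc |φ y - a| = |(φ y - φ x - -c) + -c + (φ x - a)| := by congr 1; ring
    _ ≤ |φ y - φ x - -c| + |-c| + |φ x - a| := abs_add_three _ _ _
    _ ≤ _ := by rw [abs_neg, abs_of_nonneg hc]; linarith

end InnerProductSpace

theorem descent_error_le_gamma_mul_sq {K1 K2 K3 M δ ε ρ : ℝ} (hK2 : 0 ≤ K2)
    (hK3 : 0 ≤ K3) (hM : 0 ≤ M) (hδ : 0 < δ) (hε : 0 < ε) (hρ₀ : 0 ≤ ρ)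
    (hρ : ρ ≤ K1 * δ / ε) :
    M / 2 * ρ ^ 2 + K2 * δ * ρ + 2 * (K1 * δ) ≤
      (K3 + 2 * K1 / δ + K1 ^ 2 * M / ε ^ 2 + K2 * (K1 + δ / 2 * K3) / ε
        + δ ^ 2 * K3 ^ 2 * M / (4 * ε ^ 2)) * δ ^ 2 := by
  have hquad : M / 2 * ρ ^ 2 ≤ K1 ^ 2 * M / ε ^ 2 * δ ^ 2 := calc
    M / 2 * ρ ^ 2 ≤ M * (K1 * δ / ε) ^ 2 := by gcongr; linarith
    _ = K1 ^ 2 * M / ε ^ 2 * δ ^ 2 := by ring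
  have hlin : K2 * δ * ρ ≤ K2 * (K1 + δ / 2 * K3) / ε * δ ^ 2 := calc
    K2 * δ * ρ ≤ K2 * δ * (K1 * δ / ε + δ / 2 * K3 * δ / ε) := by
      gcongr; linarith [show 0 ≤ δ / 2 * K3 * δ / ε by positivity]
    _ = K2 * (K1 + δ / 2 * K3) / ε * δ ^ 2 := by ring
  have hconst : 2 * K1 / δ * δ ^ 2 = 2 * (K1 * δ) := by field_simp
  have hrest : 0 ≤ K3 * δ ^ 2 + δ ^ 2 * K3 ^ 2 * M / (4 * ε ^ 2) * δ ^ 2 := by positivity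
  linarith [show (K3 + 2 * K1 / δ + K1 ^ 2 * M / ε ^ 2 + K2 * (K1 + δ / 2 * K3) / ε
      + δ ^ 2 * K3 ^ 2 * M / (4 * ε ^ 2)) * δ ^ 2 = K3 * δ ^ 2 + 2 * K1 / δ * δ ^ 2
      + K1 ^ 2 * M / ε ^ 2 * δ ^ 2 + K2 * (K1 + δ / 2 * K3) / ε * δ ^ 2
      + δ ^ 2 * K3 ^ 2 * M / (4 * ε ^ 2) * δ ^ 2 by ring]

theorem alg2_prediction_step_bound_combined_general
    {E : Type*} [NormedAddCommGroup E] [InnerProductSpace ℝ E] [CompleteSpace E]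
    (f : E → ℝ → ℝ) (gx : E → ℝ → E) (ft : E → ℝ → ℝ)
    (fxt : E → ℝ → E) (ftt : E → ℝ → ℝ)
    (m M K1 K2 K3 : ℝ) (hm : 0 < m) (hmM : m ≤ M)
    (hgrad : ∀ (x : E) (t : ℝ), 0 ≤ t → HasGradientAt (fun y => f y t) (gx x t) x)
    (hft : ∀ (x : E) (t : ℝ), 0 ≤ t → HasDerivAt (fun s => f x s) (ft x t) t)
    (hfxt : ∀ (x : E) (t : ℝ), 0 ≤ t → HasDerivAt (fun s => gx x s) (fxt x t) t)
    (hLip : ∀ (t : ℝ), 0 ≤ t → ∀ x y : E, ‖gx x t - gx y t‖ ≤ M * ‖x - y‖)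
    (hK1 : ∀ (x : E) (t : ℝ), 0 ≤ t → |ft x t| ≤ K1)
    (hK2 : ∀ (x : E) (t : ℝ), 0 ≤ t → ‖fxt x t‖ ≤ K2)
    (hK3 : ∀ (x : E) (t : ℝ), 0 ≤ t → |ftt x t| ≤ K3)
    (xk : E) (tk δ ε : ℝ) (hδ : 0 < δ) (hδtk : δ ≤ tk) (hε : 0 < ε)
    (xminus : E)
    (hxminus : xminus =
      if ε ≤ ‖gx xk tk‖ then
        xk - (|f xk tk - f xk (tk - δ)| / ‖gx xk tk‖ ^ 2) • gx xk tk
      else xk) :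
    |f xminus (tk + δ) - f xk tk| ≤
      max ((K3 + 2 * K1 / δ + K1 ^ 2 * M / ε ^ 2 + K2 * (K1 + δ / 2 * K3) / ε
              + δ ^ 2 * K3 ^ 2 * M / (4 * ε ^ 2)) * δ ^ 2)
        ((K1 + δ / 2 * K3) * δ) := by
  have htk : 0 ≤ tk := hδ.le.trans hδtk
  have hK3₀ : 0 ≤ K3 := (abs_nonneg _).trans (hK3 xk tk htk)
  have hf_time (a b : ℝ) (ha : 0 ≤ a) (hab : a ≤ b) : |f xk b - f xk a| ≤ K1 * (b - a) :=
    norm_sub_le_of_norm_deriv_le_of_nonneg (hft xk) (hK1 xk) ha hab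
  have hforward : |f xk (tk + δ) - f xk tk| ≤ K1 * δ := by
    simpa using hf_time tk (tk + δ) htk (by linarith)
  by_cases hcase : ε ≤ ‖gx xk tk‖
  swap
  · rw [hxminus, if_neg hcase]
    exact le_max_of_le_right (hforward.trans (by nlinarith [mul_pos hδ hδ]))
  set g := gx xk tk
  set Δ := |f xk tk - f xk (tk - δ)|
  have hΔ : Δ ≤ K1 * δ := by
    simpa using hf_time (tk - δ) tk (sub_nonneg.2 hδtk) (by linarith)
  have hρ : Δ / ‖g‖ ≤ K1 * δ / ε :=
    (div_le_div_of_nonneg_left (abs_nonneg _) hε hcase).trans (by gcongr)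
  have hdrift : ‖gx xk (tk + δ) - g‖ ≤ K2 * δ := by
    simpa using norm_sub_le_of_norm_deriv_le_of_nonneg (hfxt xk) (hK2 xk) htk
      (le_add_of_nonneg_right hδ.le)
  have hstep := abs_sub_le_of_gradient_step (a := f xk tk) (c := Δ)
    (hgrad · (tk + δ) (by linarith)) (hLip (tk + δ) (by linarith))
    (norm_pos_iff.1 (hε.trans_le hcase)) (abs_nonneg _) hdrift
  rw [hxminus, if_pos hcase]
  refine le_max_of_le_left (le_trans ?_ (descent_error_le_gamma_mul_sq
    ((norm_nonneg _).trans (hK2 xk tk htk)) hK3₀ (hm.le.trans hmM) hδ hε (by positivity) hρ))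
  linarith

/-- combined prediction-step bound for Algorithm 2: with the
prediction `x⁻ = x_k − (|f(x_k,t_k) − f(x_k,t_k−δ)|/‖∇_x f(x_k,t_k)‖²)∇_x f(x_k,t_k)`
if `‖∇_x f(x_k,t_k)‖ ≥ ε` and `x⁻ = x_k` otherwise,
`|f(x⁻, t_k + δ) − f(x_k, t_k)| ≤ max(γ'δ², μδ)` with
`γ' = K3 + 2K1/δ + K1²M/ε² + K2(K1 + (δ/2)K3)/ε + δ²K3²M/(4ε²)` and
`μ = K1 + (δ/2)K3`. -/
theorem alg2_prediction_step_bound_combined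
    {E : Type*} [NormedAddCommGroup E] [InnerProductSpace ℝ E] [CompleteSpace E]
    (f : E → ℝ → ℝ) (gx : E → ℝ → E) (ft : E → ℝ → ℝ)
    (fxt : E → ℝ → E) (ftt : E → ℝ → ℝ)
    (m M K1 K2 K3 : ℝ) (hm : 0 < m) (hmM : m ≤ M)
    (hgrad : ∀ (x : E) (t : ℝ), 0 ≤ t → HasGradientAt (fun y => f y t) (gx x t) x)
    (hft : ∀ (x : E) (t : ℝ), 0 ≤ t → HasDerivAt (fun s => f x s) (ft x t) t)
    (hfxt : ∀ (x : E) (t : ℝ), 0 ≤ t → HasDerivAt (fun s => gx x s) (fxt x t) t)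
    (hftt : ∀ (x : E) (t : ℝ), 0 ≤ t → HasDerivAt (fun s => ft x s) (ftt x t) t)
    (hsc : ∀ (t : ℝ), 0 ≤ t → ∀ x y : E, m * ‖x - y‖ ^ 2 ≤ ⟪gx x t - gx y t, x - y⟫)
    (hLip : ∀ (t : ℝ), 0 ≤ t → ∀ x y : E, ‖gx x t - gx y t‖ ≤ M * ‖x - y‖)
    (hK1 : ∀ (x : E) (t : ℝ), 0 ≤ t → |ft x t| ≤ K1)
    (hK2 : ∀ (x : E) (t : ℝ), 0 ≤ t → ‖fxt x t‖ ≤ K2)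
    (hK3 : ∀ (x : E) (t : ℝ), 0 ≤ t → |ftt x t| ≤ K3)
    (xk : E) (tk δ ε : ℝ) (hδ : 0 < δ) (hδtk : δ ≤ tk) (hε : 0 < ε)
    (xminus : E)
    (hxminus : xminus =
      if ε ≤ ‖gx xk tk‖ then
        xk - (|f xk tk - f xk (tk - δ)| / ‖gx xk tk‖ ^ 2) • gx xk tk
      else xk) :
    |f xminus (tk + δ) - f xk tk| ≤
      max ((K3 + 2 * K1 / δ + K1 ^ 2 * M / ε ^ 2 + K2 * (K1 + δ / 2 * K3) / ε
              + δ ^ 2 * K3 ^ 2 * M / (4 * ε ^ 2)) * δ ^ 2)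
        ((K1 + δ / 2 * K3) * δ) :=
  alg2_prediction_step_bound_combined_general f gx ft fxt ftt m M K1 K2 K3 hm hmM hgrad hft hfxt
    hLip hK1 hK2 hK3 xk tk δ ε hδ hδtk hε xminus hxminus
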